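/- arXiv:1504.07969 — 12 statements merged into one kernel-verified Lean document; each statement's English description precedes it below -/
import Mathlib

section
/- Consider the tree–grass ODE system G' = r_G·G − μ_G·G² − γ_TG·T·G and T' = r_T·T − μ_T·T², where r_G = γ_G − δ_G0 > 0 and r_T = γ_T − δ_T > 0, and set X_G = r_G/μ_G and Y_T = r_T/μ_T. If G, T : [0,∞) → ℝ are differentiable, satisfy these two equations for all t ≥ 0, and satisfy 0 ≤ G(0) ≤ X_G and 0 ≤ T(0) ≤ Y_T, then 0 ≤ G(t) ≤ X_G and 0 ≤ T(t) ≤ Y_T for all t ≥ 0; that is, the box B = [0, X_G] × [0, Y_T] is positively invariant for the flow between fire pulses. -/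
/-!
Each of the four faces of the box is handled by the same comparison principle: if
`y' ≤ c(t) y` wherever `y > 0`, with `c` continuous, then `y` cannot leave `(-∞, 0]`.
Writing the equations as `T' = (r_T - μ_T T) T` and `G' = (r_G - μ_G G - γ_TG T) G`
gives the lower faces with `y = -T, -G`; since `r = μ X`, the logistic terms read
`T' = -μ_T T (T - Y_T)` and `G' ≤ -μ_G G (G - X_G)` once `G, T ≥ 0`, which gives the
upper faces with `y = T - Y_T, G - X_G`.
-/

open Set Filter Topology

theorem nonpos_of_deriv_right_le_mul {y y' : ℝ → ℝ} {a b K : ℝ}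
    (hy : ContinuousOn y (Icc a b)) (hy' : ∀ x ∈ Ico a b, HasDerivWithinAt y (y' x) (Ici x) x)
    (ha : y a ≤ 0) (bound : ∀ x ∈ Ico a b, 0 < y x → y' x ≤ K * y x) :
    ∀ ⦃x⦄, x ∈ Icc a b → y x ≤ 0 := by
  -- Fence `y` by `ε e^{(K+1)(t-a)}` for every `ε > 0`; the `+1` makes the fence strict.
  let B : ℝ → ℝ → ℝ := fun ε t => ε * Real.exp ((K + 1) * (t - a))
  have hB' : ∀ ε t, HasDerivAt (B ε) ((K + 1) * B ε t) t := fun ε t =>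
    ((((hasDerivAt_id t).sub_const a).const_mul (K + 1)).exp.const_mul ε).congr_deriv
      (by simp only [B, id]; ring)
  have fenced : ∀ ε > 0, ∀ ⦃x⦄, x ∈ Icc a b → y x ≤ B ε x := fun ε hε =>
    image_le_of_deriv_right_lt_deriv_boundary' hy hy' (by simpa [B] using ha.trans hε.le)
      (fun t _ => (hB' ε t).continuousAt.continuousWithinAt)
      (fun t _ => (hB' ε t).hasDerivWithinAt)
      (fun t ht hyB => by
        have hBpos : 0 < B ε t := by positivity
        calc y' t ≤ K * y t := bound t ht (hyB ▸ hBpos)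
          _ < (K + 1) * B ε t := by rw [hyB]; linarith)
  intro x hx
  have hlim : Tendsto (fun ε => B ε x) (𝓝[>] 0) (𝓝 0) :=
    ((continuous_id.mul continuous_const).tendsto' 0 0 (zero_mul _)).mono_left
      nhdsWithin_le_nhds
  exact ge_of_tendsto hlim (eventually_nhdsWithin_of_forall fun ε hε => fenced ε hε hx)

theorem nonpos_of_hasDerivAt_le_mul {y y' c : ℝ → ℝ} {a : ℝ}
    (hy : ∀ x ≥ a, HasDerivAt y (y' x) x) (hc : ContinuousOn c (Ici a)) (ha : y a ≤ 0)
    (bound : ∀ x ≥ a, 0 < y x → y' x ≤ c x * y x) :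
    ∀ x ≥ a, y x ≤ 0 := by
  intro b hb
  obtain ⟨K, hK⟩ :=
    isCompact_Icc.bddAbove_image (hc.mono (Icc_subset_Ici_self : Icc a b ⊆ Ici a))
  refine nonpos_of_deriv_right_le_mul (K := K)
    (fun x hx => (hy x hx.1).continuousAt.continuousWithinAt)
    (fun x hx => (hy x hx.1).hasDerivWithinAt) ha
    (fun x hx hpos => ?_) ⟨hb, le_rfl⟩
  calc y' x ≤ c x * y x := bound x hx.1 hpos
    _ ≤ K * y x := by
      gcongr
      exact hK (mem_image_of_mem c (Ico_subset_Icc_self hx))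

theorem nonneg_of_hasDerivAt_eq_mul {y c : ℝ → ℝ} {a : ℝ}
    (hy : ∀ x ≥ a, HasDerivAt y (c x * y x) x) (hc : ContinuousOn c (Ici a)) (ha : 0 ≤ y a) :
    ∀ x ≥ a, 0 ≤ y x := by
  intro x hx
  have := nonpos_of_hasDerivAt_le_mul (y := -y) (fun t ht => (hy t ht).neg) hc
    (by simpa using ha) (fun t _ _ => by simp) x hx
  simpa using this

theorem box_positively_invariant_general
    (μG μT γTG rG rT XG YT : ℝ)
    (hμG : 0 < μG) (hμT : 0 < μT) (hγTG : 0 ≤ γTG)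
    (hXG : XG = rG / μG) (hYT : YT = rT / μT)
    (G T : ℝ → ℝ)
    (hG : ∀ t ≥ (0:ℝ), HasDerivAt G (rG * G t - μG * (G t) ^ 2 - γTG * T t * G t) t)
    (hT : ∀ t ≥ (0:ℝ), HasDerivAt T (rT * T t - μT * (T t) ^ 2) t)
    (hG0 : 0 ≤ G 0 ∧ G 0 ≤ XG) (hT0 : 0 ≤ T 0 ∧ T 0 ≤ YT) :
    ∀ t ≥ (0:ℝ), (0 ≤ G t ∧ G t ≤ XG) ∧ (0 ≤ T t ∧ T t ≤ YT) := by
  have hGcont : ContinuousOn G (Ici 0) := fun t ht => (hG t ht).continuousAt.continuousWithinAt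
  have hTcont : ContinuousOn T (Ici 0) := fun t ht => (hT t ht).continuousAt.continuousWithinAt
  have hT_nonneg : ∀ t ≥ (0:ℝ), 0 ≤ T t :=
    nonneg_of_hasDerivAt_eq_mul (c := fun t => rT - μT * T t)
      (fun t ht => (hT t ht).congr_deriv (by ring)) (by fun_prop) hT0.1
  have hG_nonneg : ∀ t ≥ (0:ℝ), 0 ≤ G t :=
    nonneg_of_hasDerivAt_eq_mul (c := fun t => rG - μG * G t - γTG * T t)
      (fun t ht => (hG t ht).congr_deriv (by ring)) (by fun_prop) hG0.1
  have hT_le : ∀ t ≥ (0:ℝ), T t - YT ≤ 0 :=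
    nonpos_of_hasDerivAt_le_mul (c := fun t => -μT * T t)
      (fun t ht => (hT t ht).sub_const YT) (by fun_prop) (by linarith [hT0.2])
      (fun t _ _ => le_of_eq (by rw [hYT]; field_simp; ring))
  have hG_le : ∀ t ≥ (0:ℝ), G t - XG ≤ 0 :=
    nonpos_of_hasDerivAt_le_mul (c := fun t => -μG * G t)
      (fun t ht => (hG t ht).sub_const XG) (by fun_prop) (by linarith [hG0.2])
      (fun t ht _ => by
        have hTG : 0 ≤ γTG * T t * G t := by
          have := hT_nonneg t ht; have := hG_nonneg t ht; positivity
        have hlogistic : rG * G t - μG * G t ^ 2 = -μG * G t * (G t - XG) := by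
          rw [hXG]; field_simp; ring
        linarith)
  exact fun t ht => ⟨⟨hG_nonneg t ht, by linarith [hG_le t ht]⟩,
    ⟨hT_nonneg t ht, by linarith [hT_le t ht]⟩⟩

/-- The box `[0, X_G] × [0, Y_T]` is positively invariant for the
tree–grass ODE system between fire pulses. -/
theorem box_positively_invariant
    (γG δG0 γT δT μG μT γTG rG rT XG YT : ℝ)
    (hδG0 : 0 ≤ δG0) (hδT : 0 ≤ δT)
    (hμG : 0 < μG) (hμT : 0 < μT) (hγTG : 0 ≤ γTG)
    (hrG : rG = γG - δG0) (hrT : rT = γT - δT)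
    (hrGpos : 0 < rG) (hrTpos : 0 < rT)
    (hXG : XG = rG / μG) (hYT : YT = rT / μT)
    (G T : ℝ → ℝ)
    (hG : ∀ t ≥ (0:ℝ), HasDerivAt G (rG * G t - μG * (G t) ^ 2 - γTG * T t * G t) t)
    (hT : ∀ t ≥ (0:ℝ), HasDerivAt T (rT * T t - μT * (T t) ^ 2) t)
    (hG0 : 0 ≤ G 0 ∧ G 0 ≤ XG) (hT0 : 0 ≤ T 0 ∧ T 0 ≤ YT) :
    ∀ t ≥ (0:ℝ), (0 ≤ G t ∧ G t ≤ XG) ∧ (0 ≤ T t ∧ T t ≤ YT) :=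
  box_positively_invariant_general μG μT γTG rG rT XG YT hμG hμT hγTG hXG hYT G T hG hT hG0 hT0
end

section
/- Let r > 0, μ > 0, X = r/μ, τ > 0 and λ ∈ (0,1). Define the grass stroboscopic (pulse-to-pulse) map F(g) = (1−λ)·g·e^{r·τ} / (1 + (g/X)·(e^{r·τ} − 1)) and the value g* = X·((1−λ)·e^{r·τ} − 1)/(e^{r·τ} − 1). Then F(g*) = g*, and g* > 0 if and only if R₀ := r·τ / ln(1/(1−λ)) > 1. -/
/-- `g*` is a fixed point of the grass stroboscopic map `F`, and it is
positive iff the threshold `R₀ = rτ/ln(1/(1-λ))` exceeds `1`. -/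
theorem stroboscopic_fixed_point_threshold
    (r μ X τ lam : ℝ) (hr : 0 < r) (hμ : 0 < μ) (hX : X = r / μ)
    (hτ : 0 < τ) (hlam : lam ∈ Set.Ioo (0:ℝ) 1)
    (F : ℝ → ℝ)
    (hF : F = fun g => (1 - lam) * g * Real.exp (r * τ) /
      (1 + (g / X) * (Real.exp (r * τ) - 1)))
    (gs : ℝ)
    (hgs : gs = X * ((1 - lam) * Real.exp (r * τ) - 1) / (Real.exp (r * τ) - 1)) :
    F gs = gs ∧ (0 < gs ↔ 1 < r * τ / Real.log (1 / (1 - lam))) := by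
  obtain ⟨hl0, hl1⟩ := hlam
  have hE1 : 1 < Real.exp (r * τ) := by
    rw [show (1:ℝ) = Real.exp 0 by simp]
    exact Real.exp_lt_exp.2 (by positivity)
  set E := Real.exp (r * τ) with hE
  have hEm : 0 < E - 1 := by linarith
  have hXpos : 0 < X := by rw [hX]; positivity
  have hlam1 : 0 < 1 - lam := by linarith
  have hlE : 0 < (1 - lam) * E := by positivity
  constructor
  · subst hF hgs
    have hden : 1 + (X * ((1 - lam) * E - 1) / (E - 1) / X) * (E - 1) = (1 - lam) * E := by
      field_simp
      ring
    simp only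
    rw [hden]
    field_simp
  · have hL : 0 < Real.log (1 / (1 - lam)) := by
      apply Real.log_pos
      rw [lt_div_iff₀ hlam1]; linarith
    have key : 0 < gs ↔ 1 < (1 - lam) * E := by
      rw [hgs]
      constructor
      · intro h
        by_contra hc
        push_neg at hc
        have : X * ((1 - lam) * E - 1) / (E - 1) ≤ 0 := by
          apply div_nonpos_of_nonpos_of_nonneg
          · exact mul_nonpos_of_nonneg_of_nonpos hXpos.le (by linarith)
          · linarith
        linarith
      · intro h
        apply div_pos
        · exact mul_pos hXpos (by linarith)
        · exact hEm
    rw [key]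
    have h2 : (1:ℝ) < (1 - lam) * E ↔ 1 / (1 - lam) < E := by
      rw [div_lt_iff₀ hlam1]
      constructor <;> intro h <;> linarith [mul_comm (1 - lam) E]
    rw [h2]
    have h3 : 1 / (1 - lam) < E ↔ Real.log (1 / (1 - lam)) < r * τ := by
      rw [hE, ← Real.exp_log (show (0:ℝ) < 1/(1-lam) by positivity), Real.exp_lt_exp,
        Real.exp_log (show (0:ℝ) < 1/(1-lam) by positivity)]
    rw [h3, lt_div_iff₀ hL]
    simp [mul_comm]
end

section
/- Let r > 0, μ > 0, X = r/μ, τ > 0, λ ∈ (0,1), and assume R₀ := r·τ / ln(1/(1−λ)) > 1. Then the function G̃_e(t) = X·((1−λ)·e^{r·τ} − 1)·e^{r·t} / ( ((1−λ)·e^{r·τ} − 1)·e^{r·t} + λ·e^{r·τ} ) is strictly positive on [0, τ], satisfies the logistic equation G̃_e'(t) = r·G̃_e(t) − μ·G̃_e(t)² for all t ∈ [0, τ], and satisfies the pulse (τ-periodicity) condition G̃_e(0) = (1−λ)·G̃_e(τ). Hence the impulsive grass-only system admits a positive τ-periodic grassland solution. -/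
/-!
The logistic equation `G' = r G - μ G²` is solved by `X a e^{rt} / (a e^{rt} + b)` with
`X = r / μ`. Taking `a = (1 - λ) e^{rτ} - 1` and `b = λ e^{rτ}` makes both `G(0)` and
`(1 - λ) G(τ)` equal to `X a / (e^{rτ} - 1)`, and `R₀ > 1` is exactly `(1 - λ) e^{rτ} > 1`,
i.e. `a > 0`, which makes the solution positive.
-/

open Real

noncomputable def logisticCurve (K a b r t : ℝ) : ℝ :=
  K * a * exp (r * t) / (a * exp (r * t) + b)

theorem logisticCurve_pos {K a b : ℝ} (hK : 0 < K) (ha : 0 < a) (hb : 0 < b) (r t : ℝ) :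
    0 < logisticCurve K a b r t := by
  unfold logisticCurve
  positivity

theorem hasDerivAt_logisticCurve {μ a b r t : ℝ} (hμ : μ ≠ 0)
    (hden : a * exp (r * t) + b ≠ 0) :
    HasDerivAt (logisticCurve (r / μ) a b r)
      (r * logisticCurve (r / μ) a b r t - μ * logisticCurve (r / μ) a b r t ^ 2) t := by
  have hexp : HasDerivAt (fun s => exp (r * s)) (exp (r * t) * (r * 1)) t :=
    ((hasDerivAt_id t).const_mul r).exp
  have hquot := (hexp.const_mul (r / μ * a)).div ((hexp.const_mul a).add_const b) hden
  refine hquot.congr_deriv ?_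
  unfold logisticCurve
  field_simp

theorem logisticCurve_pulse (K r τ : ℝ) {lam : ℝ} (hlam : lam ≠ 1) :
    logisticCurve K ((1 - lam) * exp (r * τ) - 1) (lam * exp (r * τ)) r 0 =
      (1 - lam) * logisticCurve K ((1 - lam) * exp (r * τ) - 1) (lam * exp (r * τ)) r τ := by
  have h1l : 1 - lam ≠ 0 := sub_ne_zero.mpr hlam.symm
  have hE : exp (r * τ) ≠ 0 := (exp_pos _).ne'
  unfold logisticCurve
  simp only [mul_zero, exp_zero, mul_one]
  by_cases hE1 : exp (r * τ) = 1
  · -- both sides are divisions by zero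
    simp [hE1]
  have hE1' : exp (r * τ) - 1 ≠ 0 := sub_ne_zero.mpr hE1
  rw [show (1 - lam) * exp (r * τ) - 1 + lam * exp (r * τ) = exp (r * τ) - 1 by ring,
    show ((1 - lam) * exp (r * τ) - 1) * exp (r * τ) + lam * exp (r * τ)
      = (1 - lam) * exp (r * τ) * (exp (r * τ) - 1) by ring]
  field_simp

theorem one_lt_mul_exp_of_one_lt_div_log {r τ lam : ℝ} (h0 : 0 < lam) (h1 : lam < 1)
    (hR₀ : 1 < r * τ / log (1 / (1 - lam))) :
    1 < (1 - lam) * exp (r * τ) := by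
  have h1l : 0 < 1 - lam := by linarith
  have hlog : 0 < log (1 / (1 - lam)) := log_pos (by rw [lt_div_iff₀ h1l]; linarith)
  have hlt : log (1 / (1 - lam)) < r * τ := by rwa [lt_div_iff₀ hlog, one_mul] at hR₀
  have hexp : 1 / (1 - lam) < exp (r * τ) := (log_lt_iff_lt_exp (by positivity)).mp hlt
  rwa [div_lt_iff₀' h1l] at hexp

theorem periodic_grassland_solution_general
    (r μ X τ lam : ℝ) (hr : 0 < r) (hμ : 0 < μ) (hX : X = r / μ)
    (hlam : lam ∈ Set.Ioo (0:ℝ) 1)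
    (hR₀ : 1 < r * τ / Real.log (1 / (1 - lam)))
    (Ge : ℝ → ℝ)
    (hGe : Ge = fun t => X * ((1 - lam) * Real.exp (r * τ) - 1) * Real.exp (r * t) /
      (((1 - lam) * Real.exp (r * τ) - 1) * Real.exp (r * t) + lam * Real.exp (r * τ))) :
    (∀ t ∈ Set.Icc (0:ℝ) τ, 0 < Ge t) ∧
    (∀ t ∈ Set.Icc (0:ℝ) τ, HasDerivAt Ge (r * Ge t - μ * (Ge t) ^ 2) t) ∧
    Ge 0 = (1 - lam) * Ge τ := by
  obtain ⟨hl0, hl1⟩ := hlam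
  have hGe' : Ge = logisticCurve X ((1 - lam) * exp (r * τ) - 1) (lam * exp (r * τ)) r := hGe
  have ha : 0 < (1 - lam) * exp (r * τ) - 1 :=
    sub_pos.mpr (one_lt_mul_exp_of_one_lt_div_log hl0 hl1 hR₀)
  have hb : 0 < lam * exp (r * τ) := by positivity
  subst hGe' hX
  refine ⟨fun t _ => logisticCurve_pos (by positivity) ha hb r t,
    fun t _ => hasDerivAt_logisticCurve hμ.ne' (by positivity), logisticCurve_pulse _ r τ hl1.ne⟩

/-- When `R₀ > 1`, the impulsive grass-only system admits a positive
τ-periodic grassland solution, given explicitly by `G̃_e`. -/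
theorem periodic_grassland_solution
    (r μ X τ lam : ℝ) (hr : 0 < r) (hμ : 0 < μ) (hX : X = r / μ)
    (hτ : 0 < τ) (hlam : lam ∈ Set.Ioo (0:ℝ) 1)
    (hR₀ : 1 < r * τ / Real.log (1 / (1 - lam)))
    (Ge : ℝ → ℝ)
    (hGe : Ge = fun t => X * ((1 - lam) * Real.exp (r * τ) - 1) * Real.exp (r * t) /
      (((1 - lam) * Real.exp (r * τ) - 1) * Real.exp (r * t) + lam * Real.exp (r * τ))) :
    (∀ t ∈ Set.Icc (0:ℝ) τ, 0 < Ge t) ∧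
    (∀ t ∈ Set.Icc (0:ℝ) τ, HasDerivAt Ge (r * Ge t - μ * (Ge t) ^ 2) t) ∧
    Ge 0 = (1 - lam) * Ge τ :=
  periodic_grassland_solution_general r μ X τ lam hr hμ hX hlam hR₀ Ge hGe
end

section
/- Let r > 0, μ > 0, X = r/μ, τ > 0, λ ∈ (0,1), and assume (1−λ)·e^{r·τ} > 1. With F(g) = (1−λ)·g·e^{r·τ}/(1 + (g/X)·(e^{r·τ} − 1)) and g* = X·((1−λ)·e^{r·τ} − 1)/(e^{r·τ} − 1), the map F is differentiable at g* and F'(g*) = 1/((1−λ)·e^{r·τ}), which lies strictly between 0 and 1. Hence the positive fixed point g* of the grass stroboscopic map is locally asymptotically stable. -/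
/-!
The stroboscopic map is a Beverton–Holt map `g ↦ a g / (1 + b g)` with `a = (1-λ)e^{rτ}` and
`b = (e^{rτ}-1)/X`. Its derivative is `a / (1 + b g)²`, and at the positive fixed point
`g* = (a-1)/b` the denominator equals `a`, so the derivative there is `1/a`, which lies in
`(0,1)` exactly when `a > 1`.
-/

noncomputable section

def bevertonHolt (a b x : ℝ) : ℝ := a * x / (1 + b * x)

theorem hasDerivAt_bevertonHolt (a b x : ℝ) (hx : 1 + b * x ≠ 0) :
    HasDerivAt (bevertonHolt a b) (a / (1 + b * x) ^ 2) x := by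
  have hnum : HasDerivAt (fun y => a * y) a x := by
    simpa using (hasDerivAt_id x).const_mul a
  have hden : HasDerivAt (fun y => 1 + b * y) b x := by
    simpa using ((hasDerivAt_id x).const_mul b).const_add 1
  refine (hnum.div hden hx).congr_deriv ?_
  ring

theorem one_add_mul_sub_one_div {a b : ℝ} (hb : b ≠ 0) :
    1 + b * ((a - 1) / b) = a := by
  field_simp
  ring

theorem hasDerivAt_bevertonHolt_fixedPoint {a b : ℝ} (ha : a ≠ 0) (hb : b ≠ 0) :
    HasDerivAt (bevertonHolt a b) a⁻¹ ((a - 1) / b) := by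
  have hx := one_add_mul_sub_one_div (a := a) hb
  refine (hasDerivAt_bevertonHolt a b _ (hx.symm ▸ ha)).congr_deriv ?_
  rw [hx]
  field_simp

end

theorem stroboscopic_fixed_point_local_stability_general
    (r μ X τ lam : ℝ) (hr : 0 < r) (hμ : 0 < μ) (hX : X = r / μ)
    (hτ : 0 < τ)
    (hcond : 1 < (1 - lam) * Real.exp (r * τ))
    (F : ℝ → ℝ)
    (hF : F = fun g => (1 - lam) * g * Real.exp (r * τ) /
      (1 + (g / X) * (Real.exp (r * τ) - 1)))
    (gs : ℝ)
    (hgs : gs = X * ((1 - lam) * Real.exp (r * τ) - 1) / (Real.exp (r * τ) - 1)) :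
    HasDerivAt F (1 / ((1 - lam) * Real.exp (r * τ))) gs ∧
    0 < 1 / ((1 - lam) * Real.exp (r * τ)) ∧
    1 / ((1 - lam) * Real.exp (r * τ)) < 1 := by
  set a := (1 - lam) * Real.exp (r * τ)
  set b := (Real.exp (r * τ) - 1) / X
  have hE : 1 < Real.exp (r * τ) := Real.one_lt_exp_iff.mpr (by positivity)
  have hXpos : 0 < X := hX ▸ div_pos hr hμ
  have hb : b ≠ 0 := (div_pos (by linarith) hXpos).ne'
  have hF' : F = bevertonHolt a b := by
    rw [hF]
    ext g
    simp only [bevertonHolt, a, b]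
    ring
  have hgs' : gs = (a - 1) / b := by
    have hE1 : Real.exp (r * τ) - 1 ≠ 0 := by linarith
    rw [hgs]
    simp only [b]
    field_simp
  refine ⟨?_, by positivity, (div_lt_one (by positivity)).mpr hcond⟩
  rw [hF', hgs', one_div]
  exact hasDerivAt_bevertonHolt_fixedPoint (by positivity) hb

/-- The derivative of the grass stroboscopic map at its positive fixed
point equals `1/((1-λ)e^{rτ})`, which lies strictly between `0` and `1`: the fixed
point is locally asymptotically stable. -/
theorem stroboscopic_fixed_point_local_stability
    (r μ X τ lam : ℝ) (hr : 0 < r) (hμ : 0 < μ) (hX : X = r / μ)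
    (hτ : 0 < τ) (hlam : lam ∈ Set.Ioo (0:ℝ) 1)
    (hcond : 1 < (1 - lam) * Real.exp (r * τ))
    (F : ℝ → ℝ)
    (hF : F = fun g => (1 - lam) * g * Real.exp (r * τ) /
      (1 + (g / X) * (Real.exp (r * τ) - 1)))
    (gs : ℝ)
    (hgs : gs = X * ((1 - lam) * Real.exp (r * τ) - 1) / (Real.exp (r * τ) - 1)) :
    HasDerivAt F (1 / ((1 - lam) * Real.exp (r * τ))) gs ∧
    0 < 1 / ((1 - lam) * Real.exp (r * τ)) ∧
    1 / ((1 - lam) * Real.exp (r * τ)) < 1 :=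
  stroboscopic_fixed_point_local_stability_general r μ X τ lam hr hμ hX hτ hcond F hF gs hgs
end

section
/- Let r > 0, μ > 0, X = r/μ, τ > 0, λ ∈ (0,1), and assume (1−λ)·e^{r·τ} > 1. With F(g) = (1−λ)·g·e^{r·τ}/(1 + (g/X)·(e^{r·τ} − 1)) and g* = X·((1−λ)·e^{r·τ} − 1)/(e^{r·τ} − 1), for every initial value g₀ > 0 the sequence of iterates g_{n+1} = F(g_n) converges to g*. This is the stroboscopic form of the global asymptotic stability of the periodic grassland equilibrium. -/
/-- Global asymptotic stability of the positive fixed point of the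
grass stroboscopic map: all iterates from positive initial values converge to `g*`. -/
theorem stroboscopic_fixed_point_global_stability
    (r μ X τ lam : ℝ) (hr : 0 < r) (hμ : 0 < μ) (hX : X = r / μ)
    (hτ : 0 < τ) (hlam : lam ∈ Set.Ioo (0:ℝ) 1)
    (hcond : 1 < (1 - lam) * Real.exp (r * τ))
    (F : ℝ → ℝ)
    (hF : F = fun g => (1 - lam) * g * Real.exp (r * τ) /
      (1 + (g / X) * (Real.exp (r * τ) - 1)))
    (gs : ℝ)
    (hgs : gs = X * ((1 - lam) * Real.exp (r * τ) - 1) / (Real.exp (r * τ) - 1)) :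
    ∀ g₀ > (0:ℝ), Filter.Tendsto (fun n => F^[n] g₀) Filter.atTop (nhds gs) := by
  intro g₀ hg₀
  obtain ⟨hlam0, hlam1⟩ := hlam
  set E := Real.exp (r * τ) with hEdef
  have hE1 : 1 < E := Real.one_lt_exp_iff.mpr (mul_pos hr hτ)
  have hXpos : 0 < X := by rw [hX]; positivity
  have hlamp : 0 < 1 - lam := by linarith
  -- affine coefficients in inverted coordinates
  set a : ℝ := ((1 - lam) * E)⁻¹ with hadef
  set b : ℝ := (E - 1) / (X * ((1 - lam) * E)) with hbdef
  have ha0 : 0 < a := by rw [hadef]; positivity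
  have hlE : (0:ℝ) < (1 - lam) * E := by positivity
  have ha1 : a < 1 := by
    rw [hadef]
    exact inv_lt_one_of_one_lt₀ hcond
  have hb0 : 0 < b := by
    rw [hbdef]
    have : 0 < E - 1 := by linarith
    positivity
  set us : ℝ := b / (1 - a) with husdef
  have h1a : 0 < 1 - a := by linarith
  have hus0 : 0 < us := by rw [husdef]; positivity
  -- positivity of iterates
  have hFpos : ∀ g : ℝ, 0 < g → 0 < F g := by
    intro g hg
    rw [hF]
    have hden : 0 < 1 + (g / X) * (E - 1) := by
      have : 0 < (g / X) * (E - 1) := by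
        have : 0 < E - 1 := by linarith
        positivity
      linarith
    have hnum : 0 < (1 - lam) * g * E := by positivity
    exact div_pos hnum hden
  have hpos : ∀ n : ℕ, 0 < F^[n] g₀ := by
    intro n
    induction n with
    | zero => simpa using hg₀
    | succ n ih => rw [Function.iterate_succ_apply']; exact hFpos _ ih
  -- recurrence for inverses
  have hrec : ∀ n : ℕ, (F^[n+1] g₀)⁻¹ = a * (F^[n] g₀)⁻¹ + b := by
    intro n
    rw [Function.iterate_succ_apply']
    set g := F^[n] g₀ with hgdef
    have hg : 0 < g := hpos n
    have hden : 0 < 1 + (g / X) * (E - 1) := by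
      have : 0 < (g / X) * (E - 1) := by
        have : 0 < E - 1 := by linarith
        positivity
      linarith
    rw [hF]
    simp only
    rw [hadef, hbdef]
    field_simp
  -- closed form
  have hfix : a * us + b = us := by
    rw [husdef]
    field_simp
    ring
  have hform : ∀ n : ℕ, (F^[n] g₀)⁻¹ = us + a ^ n * (g₀⁻¹ - us) := by
    intro n
    induction n with
    | zero => simp
    | succ n ih =>
      rw [hrec n, ih]
      linear_combination hfix
  -- convergence of the inverses
  have htend : Filter.Tendsto (fun n => (F^[n] g₀)⁻¹) Filter.atTop (nhds us) := by
    have hpow : Filter.Tendsto (fun n : ℕ => a ^ n) Filter.atTop (nhds 0) :=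
      tendsto_pow_atTop_nhds_zero_of_lt_one ha0.le ha1
    have : Filter.Tendsto (fun n : ℕ => us + a ^ n * (g₀⁻¹ - us)) Filter.atTop
        (nhds (us + 0 * (g₀⁻¹ - us))) :=
      Filter.Tendsto.add tendsto_const_nhds (hpow.mul tendsto_const_nhds)
    simpa [hform] using this
  -- invert back
  have husgs : us⁻¹ = gs := by
    rw [husdef, hadef, hbdef, hgs]
    have hE0 : E ≠ 0 := by positivity
    have hE1' : E - 1 ≠ 0 := by linarith
    have hlE' : (1 - lam) * E ≠ 0 := ne_of_gt hlE
    have hc : (1 - lam) * E - 1 ≠ 0 := by linarith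
    field_simp
  have hfin : Filter.Tendsto (fun n => ((F^[n] g₀)⁻¹)⁻¹) Filter.atTop (nhds us⁻¹) :=
    htend.inv₀ (ne_of_gt hus0)
  rw [husgs] at hfin
  refine hfin.congr fun n => ?_
  exact inv_inv _
end

section
/- Let r > 0, μ > 0, X = r/μ, τ > 0, λ ∈ (0,1), and assume (1−λ)·e^{r·τ} < 1 (equivalently R₀ := r·τ/ln(1/(1−λ)) < 1). With F(g) = (1−λ)·g·e^{r·τ}/(1 + (g/X)·(e^{r·τ} − 1)), for every g₀ ≥ 0 the iterates g_{n+1} = F(g_n) satisfy g_n ≤ g₀·((1−λ)·e^{r·τ})ⁿ for all n, and hence g_n → 0 as n → ∞. This is the grass-extinction part of the global asymptotic stability of the forest equilibrium when R₀ < 1. -/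
/-- When `(1-λ)e^{rτ} < 1` (i.e. `R₀ < 1`) the iterates of the grass
stroboscopic map are dominated by a geometric sequence and converge to `0`:
grass goes extinct (forest equilibrium). -/
theorem stroboscopic_grass_extinction
    (r μ X τ lam : ℝ) (hr : 0 < r) (hμ : 0 < μ) (hX : X = r / μ)
    (hτ : 0 < τ) (hlam : lam ∈ Set.Ioo (0:ℝ) 1)
    (hcond : (1 - lam) * Real.exp (r * τ) < 1)
    (F : ℝ → ℝ)
    (hF : F = fun g => (1 - lam) * g * Real.exp (r * τ) /
      (1 + (g / X) * (Real.exp (r * τ) - 1))) :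
    ∀ g₀ ≥ (0:ℝ),
      (∀ n : ℕ, F^[n] g₀ ≤ g₀ * ((1 - lam) * Real.exp (r * τ)) ^ n) ∧
      Filter.Tendsto (fun n => F^[n] g₀) Filter.atTop (nhds 0) := by
  intro g₀ hg₀
  set q : ℝ := (1 - lam) * Real.exp (r * τ) with hq
  have hX0 : 0 < X := by rw [hX]; positivity
  have hE1 : 1 < Real.exp (r * τ) := Real.one_lt_exp_iff.mpr (by positivity)
  have hq0 : 0 ≤ q := by
    have : 0 ≤ 1 - lam := by linarith [hlam.2]
    positivity
  have key : ∀ g : ℝ, 0 ≤ g → 0 ≤ F g ∧ F g ≤ q * g := by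
    intro g hg
    have hden : 1 ≤ 1 + (g / X) * (Real.exp (r * τ) - 1) := by
      have : 0 ≤ (g / X) * (Real.exp (r * τ) - 1) := by
        apply mul_nonneg (div_nonneg hg hX0.le); linarith
      linarith
    have hnum : 0 ≤ (1 - lam) * g * Real.exp (r * τ) := by
      have : 0 ≤ 1 - lam := by linarith [hlam.2]
      positivity
    constructor
    · rw [hF]; exact div_nonneg hnum (by linarith)
    · rw [hF]
      simp only
      calc (1 - lam) * g * Real.exp (r * τ) / (1 + g / X * (Real.exp (r * τ) - 1))
          ≤ (1 - lam) * g * Real.exp (r * τ) / 1 :=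
            div_le_div_of_nonneg_left hnum one_pos hden |>.trans_eq rfl
        _ = q * g := by rw [div_one, hq]; ring
  have hiter : ∀ n : ℕ, 0 ≤ F^[n] g₀ ∧ F^[n] g₀ ≤ g₀ * q ^ n := by
    intro n
    induction n with
    | zero => simpa using hg₀
    | succ n ih =>
      rw [Function.iterate_succ_apply']
      obtain ⟨h1, h2⟩ := key _ ih.1
      refine ⟨h1, h2.trans ?_⟩
      calc q * F^[n] g₀ ≤ q * (g₀ * q ^ n) := by
            exact mul_le_mul_of_nonneg_left ih.2 hq0
        _ = g₀ * q ^ (n + 1) := by ring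
  refine ⟨fun n => (hiter n).2, ?_⟩
  have hgeo : Filter.Tendsto (fun n : ℕ => g₀ * q ^ n) Filter.atTop (nhds 0) := by
    have := tendsto_pow_atTop_nhds_zero_of_lt_one hq0 hcond
    simpa using this.const_mul g₀
  exact squeeze_zero (fun n => (hiter n).1) (fun n => (hiter n).2) hgeo
end

section
/- Let r_G, r_T, μ_G, μ_T > 0, γ_TG ∈ ℝ, Y_T = r_T/μ_T, T₀ > 0 and G₀ > 0. Let T(t) = T₀·e^{r_T·t}/(1 + (T₀/Y_T)·(e^{r_T·t} − 1)) be the logistic tree solution, and define m(t) = r_G·t − (γ_TG/μ_T)·ln(1 + (T₀/Y_T)·(e^{r_T·t} − 1)) and χ(t) = e^{m(t)}. Then the function G(t) = χ(t)·G₀ / (1 + μ_G·G₀·∫₀^t χ(u) du) satisfies G(0) = G₀, G(t) > 0, and G'(t) = (r_G − γ_TG·T(t))·G(t) − μ_G·G(t)² for all t ≥ 0; i.e., it is the explicit solution of the grass equation coupled to the logistic tree biomass. -/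
/-!
Writing `D(t) = 1 + (T₀/Y_T)(e^{r_T t} - 1)` for the logistic denominator, one has
`(log D)' = (r_T/Y_T)·T = μ_T·T`, so `m' = r_G - γ_TG·T` and `χ' = (r_G - γ_TG·T)·χ`.
Thus `χ` is an integrating factor: the quotient `χ G₀ / (1 + μ_G G₀ ∫₀ᵗ χ)` solves the
Bernoulli equation `G' = a G - μ_G G²` with `a = r_G - γ_TG·T`. Since `D > 0` for `t ≥ 0`,
`χ` is continuous there, which gives the derivative of the integral by the fundamental theorem
of calculus and positivity of the denominator.
-/

open Real

theorem hasDerivAt_div_one_add_mul_of_integratingFactor {χ I : ℝ → ℝ} {a μ G₀ t : ℝ}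
    (hχ : HasDerivAt χ (a * χ t) t) (hI : HasDerivAt I (χ t) t)
    (hden : 1 + μ * G₀ * I t ≠ 0) :
    HasDerivAt (fun s => χ s * G₀ / (1 + μ * G₀ * I s))
      (a * (χ t * G₀ / (1 + μ * G₀ * I t)) - μ * (χ t * G₀ / (1 + μ * G₀ * I t)) ^ 2) t := by
  refine ((hχ.mul_const G₀).div ((hI.const_mul (μ * G₀)).const_add 1) hden).congr_deriv ?_
  field_simp

theorem hasDerivAt_integral_of_continuousAt_Ici {f : ℝ → ℝ} {a t : ℝ} (hmeas : Measurable f)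
    (hcont : ∀ s, a ≤ s → ContinuousAt f s) (ht : a ≤ t) :
    HasDerivAt (fun u => ∫ x in a..u, f x) (f t) t := by
  have hint : IntervalIntegrable f MeasureTheory.volume a t := by
    refine ContinuousOn.intervalIntegrable fun s hs => (hcont s ?_).continuousWithinAt
    rw [Set.uIcc_of_le ht] at hs
    exact hs.1
  exact intervalIntegral.integral_hasDerivAt_right hint
    hmeas.stronglyMeasurable.stronglyMeasurableAtFilter (hcont t ht)

section Logistic

variable {T₀ Y r μ t : ℝ}

theorem logisticDen_pos (hT₀ : 0 ≤ T₀) (hY : 0 ≤ Y) (hrt : 0 ≤ r * t) :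
    0 < 1 + T₀ / Y * (exp (r * t) - 1) := by
  have := one_le_exp hrt
  have : 0 ≤ T₀ / Y := div_nonneg hT₀ hY
  nlinarith

theorem hasDerivAt_log_logisticDen (hD : 1 + T₀ / Y * (exp (r * t) - 1) ≠ 0) :
    HasDerivAt (fun s => log (1 + T₀ / Y * (exp (r * s) - 1)))
      (r / Y * (T₀ * exp (r * t) / (1 + T₀ / Y * (exp (r * t) - 1)))) t := by
  have hexp : HasDerivAt (fun s => exp (r * s)) (exp (r * t) * r) t :=
    ((hasDerivAt_id t).const_mul r).exp.congr_deriv (by simp)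
  refine ((((hexp.sub_const 1).const_mul (T₀ / Y)).const_add 1).log hD).congr_deriv ?_
  ring

theorem hasDerivAt_exp_sub_mul_log_logisticDen {rG γ : ℝ} (hr : r ≠ 0) (hμ : μ ≠ 0)
    (hY : Y = r / μ) (hD : 1 + T₀ / Y * (exp (r * t) - 1) ≠ 0) :
    HasDerivAt (fun s => exp (rG * s - γ / μ * log (1 + T₀ / Y * (exp (r * s) - 1))))
      ((rG - γ * (T₀ * exp (r * t) / (1 + T₀ / Y * (exp (r * t) - 1)))) *
        exp (rG * t - γ / μ * log (1 + T₀ / Y * (exp (r * t) - 1)))) t := by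
  have hlin : HasDerivAt (fun s => rG * s) rG t := by
    simpa using (hasDerivAt_id t).const_mul rG
  have hrY : r / Y = μ := by rw [hY]; field_simp
  refine ((hlin.sub ((hasDerivAt_log_logisticDen hD).const_mul (γ / μ))).exp).congr_deriv ?_
  rw [hrY, mul_comm]
  congr 1
  field_simp

end Logistic

theorem grass_explicit_solution_coupled_general
    (rG rT μG μT γTG YT T₀ G₀ : ℝ)
    (hrT : 0 < rT) (hμG : 0 < μG) (hμT : 0 < μT)
    (hYT : YT = rT / μT) (hT₀ : 0 < T₀) (hG₀ : 0 < G₀)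
    (T m χ G : ℝ → ℝ)
    (hT : T = fun t => T₀ * Real.exp (rT * t) / (1 + (T₀ / YT) * (Real.exp (rT * t) - 1)))
    (hm : m = fun t => rG * t - (γTG / μT) *
      Real.log (1 + (T₀ / YT) * (Real.exp (rT * t) - 1)))
    (hχ : χ = fun t => Real.exp (m t))
    (hG : G = fun t => χ t * G₀ / (1 + μG * G₀ * ∫ u in (0:ℝ)..t, χ u)) :
    G 0 = G₀ ∧ (∀ t ≥ (0:ℝ), 0 < G t) ∧
      ∀ t ≥ (0:ℝ), HasDerivAt G ((rG - γTG * T t) * G t - μG * (G t) ^ 2) t := by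
  subst hG
  have hχ_pos (t : ℝ) : 0 < χ t := by rw [hχ]; exact exp_pos _
  have hχ_deriv (t : ℝ) (ht : 0 ≤ t) : HasDerivAt χ ((rG - γTG * T t) * χ t) t := by
    have hD := logisticDen_pos hT₀.le (hYT ▸ div_pos hrT hμT).le (mul_nonneg hrT.le ht)
    subst hχ hm hT
    exact hasDerivAt_exp_sub_mul_log_logisticDen hrT.ne' hμT.ne' hYT hD.ne'
  have hχ_meas : Measurable χ := by subst hχ hm; fun_prop
  have hden_pos (t : ℝ) (ht : 0 ≤ t) : 0 < 1 + μG * G₀ * ∫ u in (0:ℝ)..t, χ u := by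
    have : 0 ≤ ∫ u in (0:ℝ)..t, χ u :=
      intervalIntegral.integral_nonneg ht fun u _ => (hχ_pos u).le
    positivity
  refine ⟨by simp [hχ, hm], fun t ht => ?_, fun t ht => ?_⟩
  · have := hden_pos t ht
    have := hχ_pos t
    positivity
  · have hI := hasDerivAt_integral_of_continuousAt_Ici hχ_meas
      (fun s hs => (hχ_deriv s hs).continuousAt) ht
    exact hasDerivAt_div_one_add_mul_of_integratingFactor (hχ_deriv t ht) hI (hden_pos t ht).ne'

/-- Explicit solution of the grass equation coupled to the logistic
tree biomass, via the integrating factor `χ`. -/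
theorem grass_explicit_solution_coupled
    (rG rT μG μT γTG YT T₀ G₀ : ℝ)
    (hrG : 0 < rG) (hrT : 0 < rT) (hμG : 0 < μG) (hμT : 0 < μT)
    (hYT : YT = rT / μT) (hT₀ : 0 < T₀) (hG₀ : 0 < G₀)
    (T m χ G : ℝ → ℝ)
    (hT : T = fun t => T₀ * Real.exp (rT * t) / (1 + (T₀ / YT) * (Real.exp (rT * t) - 1)))
    (hm : m = fun t => rG * t - (γTG / μT) *
      Real.log (1 + (T₀ / YT) * (Real.exp (rT * t) - 1)))
    (hχ : χ = fun t => Real.exp (m t))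
    (hG : G = fun t => χ t * G₀ / (1 + μG * G₀ * ∫ u in (0:ℝ)..t, χ u)) :
    G 0 = G₀ ∧ (∀ t ≥ (0:ℝ), 0 < G t) ∧
      ∀ t ≥ (0:ℝ), HasDerivAt G ((rG - γTG * T t) * G t - μG * (G t) ^ 2) t :=
  grass_explicit_solution_coupled_general rG rT μG μT γTG YT T₀ G₀ hrT hμG hμT hYT hT₀ hG₀ T m χ G
    hT hm hχ hG
end

section
/- Let r_G, r_T, μ_G, μ_T > 0, γ_TG ≥ 0, Y_T = r_T/μ_T, τ > 0, λ_fG ∈ (0,1), λ_fT ∈ (0,1), and let ω : ℝ → ℝ be continuous with 0 ≤ ω(x) < 1 for all x. Define χ(t, y) = exp( r_G·t − (γ_TG/μ_T)·ln(1 + (y/Y_T)·(e^{r_T·t} − 1)) ), φ(y) = ((1−λ_fG)·χ(τ, y) − 1)/(μ_G·∫₀^τ χ(u, y) du), and h(y) = (y/Y_T)·(e^{r_T·τ} − 1) + λ_fT·ω(λ_fG·φ(y))·e^{r_T·τ} − (e^{r_T·τ} − 1) for y ∈ [0, Y_T]. If h(0) < 0 and h(Y_T) > 0, then there exists y* ∈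 (0, Y_T) with h(y*) = 0; moreover, setting x* = φ(y*), the pair (x*, y*) satisfies the fixed-point equations of the stroboscopic map, namely x* = ((1−λ_fG)·χ(τ, y*) − 1)/(μ_G·∫₀^τ χ(u, y*) du) and y* = Y_T·((1 − λ_fT·ω(λ_fG·x*))·e^{r_T·τ} − 1)/(e^{r_T·τ} − 1). -/
/-- Existence of a positive zero of the scalar function `h` on
`(0, Y_T)` (by the intermediate value theorem), providing a fixed point of the
stroboscopic map, i.e. a positive τ-periodic tree–grass (savanna) equilibrium. -/
theorem savanna_fixed_point_exists
    (rG rT μG μT γTG YT τ lamfG lamfT : ℝ)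
    (hrG : 0 < rG) (hrT : 0 < rT) (hμG : 0 < μG) (hμT : 0 < μT)
    (hγTG : 0 ≤ γTG) (hYT : YT = rT / μT) (hτ : 0 < τ)
    (hlamfG : lamfG ∈ Set.Ioo (0:ℝ) 1) (hlamfT : lamfT ∈ Set.Ioo (0:ℝ) 1)
    (ω : ℝ → ℝ) (hωcont : Continuous ω) (hωrange : ∀ x, 0 ≤ ω x ∧ ω x < 1)
    (χ : ℝ → ℝ → ℝ)
    (hχ : χ = fun t y => Real.exp (rG * t - (γTG / μT) *
      Real.log (1 + (y / YT) * (Real.exp (rT * t) - 1))))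
    (φ hfun : ℝ → ℝ)
    (hφ : φ = fun y => ((1 - lamfG) * χ τ y - 1) / (μG * ∫ u in (0:ℝ)..τ, χ u y))
    (hh : hfun = fun y => (y / YT) * (Real.exp (rT * τ) - 1) +
      lamfT * ω (lamfG * φ y) * Real.exp (rT * τ) - (Real.exp (rT * τ) - 1))
    (h0 : hfun 0 < 0) (hYTpos : 0 < hfun YT) :
    ∃ ys ∈ Set.Ioo (0:ℝ) YT, hfun ys = 0 ∧
      φ ys = ((1 - lamfG) * χ τ ys - 1) / (μG * ∫ u in (0:ℝ)..τ, χ u ys) ∧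
      ys = YT * ((1 - lamfT * ω (lamfG * φ ys)) * Real.exp (rT * τ) - 1) /
        (Real.exp (rT * τ) - 1) := by
  obtain ⟨hlG0, hlG1⟩ := hlamfG
  obtain ⟨hlT0, hlT1⟩ := hlamfT
  have hYT0 : 0 < YT := by rw [hYT]; positivity
  set E := Real.exp (rT * τ) with hE
  have hE1 : 1 < E := by
    rw [hE]
    nlinarith [Real.add_one_le_exp (rT * τ), mul_pos hrT hτ]
  -- clamping function
  set ψ : ℝ → ℝ := fun y => max 0 (min y YT) with hψ
  have hψcont : Continuous ψ := continuous_const.max (continuous_id.min continuous_const)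
  have hψmem : ∀ y, ψ y ∈ Set.Icc (0:ℝ) YT := by
    intro y
    constructor
    · exact le_max_left _ _
    · exact max_le hYT0.le (min_le_right _ _)
  have hψeq : ∀ y ∈ Set.Icc (0:ℝ) YT, ψ y = y := by
    intro y hy
    simp [hψ, min_eq_left hy.2, max_eq_right hy.1]
  -- positivity of the log argument
  have hpos : ∀ (u y : ℝ), 0 ≤ y → y ≤ YT →
      0 < 1 + (y / YT) * (Real.exp (rT * u) - 1) := by
    intro u y hy0 hy1
    have hs0 : 0 ≤ y / YT := div_nonneg hy0 hYT0.le
    have hs1 : y / YT ≤ 1 := (div_le_one hYT0).mpr hy1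
    have hc : 0 < Real.exp (rT * u) := Real.exp_pos _
    nlinarith [mul_nonneg hs0 hc.le]
  -- joint continuity of clamped χ
  have hFcont : Continuous (Function.uncurry fun (y u : ℝ) => χ u (ψ y)) := by
    rw [hχ]
    have hgcont : Continuous (fun p : ℝ × ℝ =>
        1 + (ψ p.1 / YT) * (Real.exp (rT * p.2) - 1)) := by
      fun_prop
    have hlog : Continuous fun p : ℝ × ℝ =>
        Real.log (1 + (ψ p.1 / YT) * (Real.exp (rT * p.2) - 1)) :=
      hgcont.log fun p => (hpos p.2 (ψ p.1) (hψmem p.1).1 (hψmem p.1).2).ne'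
    exact (((continuous_const.mul continuous_snd).sub
      (continuous_const.mul hlog))).rexp
  -- continuity of the clamped integral
  set I : ℝ → ℝ := fun y => ∫ u in (0:ℝ)..τ, χ u (ψ y) with hI
  have hIcont : Continuous I :=
    intervalIntegral.continuous_parametric_intervalIntegral_of_continuous'
      hFcont 0 τ
  -- χ is positive and continuous in u for clamped y, so I > 0
  have hχpos : ∀ u y, 0 < χ u y := by
    intro u y; rw [hχ]; exact Real.exp_pos _
  have hIpos : ∀ y, 0 < I y := by
    intro y
    have hcont : Continuous fun u => χ u (ψ y) :=
      hFcont.comp (Continuous.prodMk_right y)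
    exact intervalIntegral.intervalIntegral_pos_of_pos
      (hcont.intervalIntegrable 0 τ) (fun u => hχpos u (ψ y)) hτ
  -- continuous version of φ
  set Φ : ℝ → ℝ := fun y => ((1 - lamfG) * χ τ (ψ y) - 1) / (μG * I y) with hΦ
  have hΦcont : Continuous Φ := by
    apply Continuous.div
    · exact (continuous_const.mul
        (hFcont.comp (continuous_id.prodMk continuous_const))).sub continuous_const
    · exact continuous_const.mul hIcont
    · intro y
      exact (mul_pos hμG (hIpos y)).ne'
  have hΦeq : ∀ y ∈ Set.Icc (0:ℝ) YT, Φ y = φ y := by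
    intro y hy
    rw [hΦ, hφ]
    simp only [hI]
    rw [hψeq y hy]
  -- continuous version of hfun
  set H : ℝ → ℝ := fun y => (y / YT) * (E - 1) + lamfT * ω (lamfG * Φ y) * E - (E - 1)
    with hH
  have hHcont : Continuous H := by
    apply Continuous.sub
    · exact ((continuous_id.div_const YT).mul continuous_const).add
        ((continuous_const.mul (hωcont.comp (continuous_const.mul hΦcont))).mul
          continuous_const)
    · exact continuous_const
  have hHeq : ∀ y ∈ Set.Icc (0:ℝ) YT, H y = hfun y := by
    intro y hy
    rw [hH, hh]
    simp only [hΦeq y hy, hE]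
  -- IVT
  have h00 : (0:ℝ) ∈ Set.Icc (0:ℝ) YT := Set.left_mem_Icc.mpr hYT0.le
  have hYY : YT ∈ Set.Icc (0:ℝ) YT := Set.right_mem_Icc.mpr hYT0.le
  have hivt := intermediate_value_Ioo hYT0.le hHcont.continuousOn
  have h0mem : (0:ℝ) ∈ Set.Ioo (H 0) (H YT) := by
    rw [hHeq 0 h00, hHeq YT hYY]
    exact ⟨h0, hYTpos⟩
  obtain ⟨ys, hys, hHys⟩ := hivt h0mem
  have hysIcc : ys ∈ Set.Icc (0:ℝ) YT := ⟨hys.1.le, hys.2.le⟩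
  have hzero : hfun ys = 0 := by rw [← hHeq ys hysIcc, hHys]
  refine ⟨ys, hys, hzero, by rw [hφ], ?_⟩
  have hEq : (ys / YT) * (E - 1) + lamfT * ω (lamfG * φ ys) * E - (E - 1) = 0 := by
    rw [hh] at hzero
    simpa [hE] using hzero
  have hE1' : E - 1 ≠ 0 := by linarith
  have hYTne : YT ≠ 0 := hYT0.ne'
  field_simp at hEq ⊢
  ring_nf at hEq ⊢
  linarith [hEq]
end

section
/- Let r > 0, μ > 0, τ > 0 and λ ∈ (0,1). Suppose G : [0, τ] → (0, ∞) is differentiable with G'(t) = r·G(t) − μ·G(t)² for all t ∈ [0, τ] and G(0) = (1−λ)·G(τ). Then the Floquet multiplier λ₁ := (1−λ)·exp( r·τ − 2μ·∫₀^τ G(u) du ) equals exp( −μ·∫₀^τ G(u) du ), and in particular 0 < λ₁ < 1. This shows that the grass-direction Floquet multiplier of the periodic grassland equilibrium is always strictly less than one. -/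
/-- The grass-direction Floquet multiplier of the periodic grassland
equilibrium equals `exp(−μ ∫₀^τ G)` and is always strictly between `0` and `1`. -/
theorem grassland_floquet_multiplier
    (r μ τ lam lam₁ : ℝ) (hr : 0 < r) (hμ : 0 < μ) (hτ : 0 < τ)
    (hlam : lam ∈ Set.Ioo (0:ℝ) 1)
    (G : ℝ → ℝ)
    (hGpos : ∀ t ∈ Set.Icc (0:ℝ) τ, 0 < G t)
    (hode : ∀ t ∈ Set.Icc (0:ℝ) τ, HasDerivAt G (r * G t - μ * (G t) ^ 2) t)
    (hpulse : G 0 = (1 - lam) * G τ)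
    (hlam₁ : lam₁ = (1 - lam) * Real.exp (r * τ - 2 * μ * ∫ u in (0:ℝ)..τ, G u)) :
    lam₁ = Real.exp (-μ * ∫ u in (0:ℝ)..τ, G u) ∧ 0 < lam₁ ∧ lam₁ < 1 := by
  obtain ⟨hl0, hl1⟩ := hlam
  have h0τ : (0:ℝ) ≤ τ := hτ.le
  have huIcc : Set.uIcc (0:ℝ) τ = Set.Icc 0 τ := Set.uIcc_of_le h0τ
  have hGcont : ContinuousOn G (Set.Icc 0 τ) := fun t ht =>
    ((hode t ht).continuousAt).continuousWithinAt
  have hGint : IntervalIntegrable G MeasureTheory.volume 0 τ := by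
    apply ContinuousOn.intervalIntegrable
    rwa [huIcc]
  have hderint : IntervalIntegrable (fun u => r - μ * G u) MeasureTheory.volume 0 τ := by
    apply ContinuousOn.intervalIntegrable
    rw [huIcc]
    exact (continuousOn_const.sub (continuousOn_const.mul hGcont))
  have hF : ∀ t ∈ Set.uIcc (0:ℝ) τ, HasDerivAt (fun t => Real.log (G t))
      (r - μ * G t) t := by
    intro t ht
    rw [huIcc] at ht
    have hne : G t ≠ 0 := (hGpos t ht).ne'
    have := (hode t ht).log hne
    convert this using 1
    field_simp
  have hFTC : (∫ u in (0:ℝ)..τ, (r - μ * G u)) = Real.log (G τ) - Real.log (G 0) :=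
    intervalIntegral.integral_eq_sub_of_hasDerivAt hF hderint
  set I := ∫ u in (0:ℝ)..τ, G u with hI
  have hint : (∫ u in (0:ℝ)..τ, (r - μ * G u)) = r * τ - μ * I := by
    rw [intervalIntegral.integral_sub intervalIntegrable_const (hGint.const_mul μ),
      intervalIntegral.integral_const, intervalIntegral.integral_const_mul]
    simp [smul_eq_mul]; ring
  have hIpos : 0 < I := by
    apply intervalIntegral.intervalIntegral_pos_of_pos_on hGint _ hτ
    intro x hx
    exact hGpos x ⟨hx.1.le, hx.2.le⟩
  have hG0 : 0 < G 0 := hGpos 0 ⟨le_rfl, h0τ⟩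
  have hGτ : 0 < G τ := hGpos τ ⟨h0τ, le_rfl⟩
  have hkey : r * τ - μ * I = Real.log (G τ) - Real.log (G 0) := by
    rw [← hint, hFTC]
  have hexp : Real.exp (r * τ - μ * I) = G τ / G 0 := by
    rw [hkey, Real.exp_sub, Real.exp_log hGτ, Real.exp_log hG0]
  have h1lam : (1 - lam) = Real.exp (-(r * τ - μ * I)) := by
    have : Real.exp (-(r * τ - μ * I)) = G 0 / G τ := by
      rw [Real.exp_neg, hexp]
      field_simp
    rw [this, hpulse]
    field_simp
  have hmain : lam₁ = Real.exp (-μ * I) := by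
    rw [hlam₁, h1lam, ← Real.exp_add]
    simp [smul_eq_mul]; ring
  refine ⟨hmain, ?_, ?_⟩
  · rw [hmain]; exact Real.exp_pos _
  · rw [hmain]
    have : -μ * I < 0 := by nlinarith
    calc Real.exp (-μ * I) < Real.exp 0 := Real.exp_lt_exp.mpr this
      _ = 1 := Real.exp_zero
end

section
/- Let λ ∈ (0,1), τ > 0, r_G > 0, r_T > 0, μ_T > 0 and γ_TG > 0. Define ν₁ = (1−λ)·exp( r_G·τ − (γ_TG/μ_T)·r_T·τ ), R₀₁ = (r_G/r_T)·(μ_T/γ_TG), R₀ = r_G·τ / ln(1/(1−λ)), and R̃ = R₀·(1 − 1/R₀₁). Then ν₁ < 1 if and only if R̃ < 1, and ν₁ > 1 if and only if R̃ > 1. In particular: if R₀₁ ≤ 1 then ν₁ < 1 (the forest equilibrium (0, Y_T) is locally asymptotically stable); if R₀₁ > 1 and R̃ < 1 then ν₁ < 1 (forest still locally asymptotically stable); and if R₀₁ > 1 and R̃ > 1 then ν₁ > 1 (forest unstable). -/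
/-- Stability of the forest equilibrium `(0, Y_T)` in terms of the
grass-direction eigenvalue `ν₁` of the linearized stroboscopic map and the
thresholds `R₀₁`, `R₀` and `R̃ = R₀(1 − 1/R₀₁)`. -/
theorem forest_equilibrium_stability_thresholds
    (lam τ rG rT μT γTG ν₁ R₀₁ R₀ Rt : ℝ)
    (hlam : lam ∈ Set.Ioo (0:ℝ) 1) (hτ : 0 < τ) (hrG : 0 < rG) (hrT : 0 < rT)
    (hμT : 0 < μT) (hγTG : 0 < γTG)
    (hν₁ : ν₁ = (1 - lam) * Real.exp (rG * τ - (γTG / μT) * rT * τ))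
    (hR₀₁ : R₀₁ = (rG / rT) * (μT / γTG))
    (hR₀ : R₀ = rG * τ / Real.log (1 / (1 - lam)))
    (hRt : Rt = R₀ * (1 - 1 / R₀₁)) :
    (ν₁ < 1 ↔ Rt < 1) ∧ (1 < ν₁ ↔ 1 < Rt) ∧
    (R₀₁ ≤ 1 → ν₁ < 1) ∧
    (1 < R₀₁ → Rt < 1 → ν₁ < 1) ∧
    (1 < R₀₁ → 1 < Rt → 1 < ν₁) := by
  obtain ⟨hl0, hl1⟩ := hlam
  have h1l : (0:ℝ) < 1 - lam := by linarith
  set L : ℝ := Real.log (1 / (1 - lam)) with hLdef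
  have hL : 0 < L := Real.log_pos (by rw [lt_div_iff₀ h1l]; linarith)
  have hexpL : Real.exp L = 1 / (1 - lam) := Real.exp_log (by positivity)
  have h1lam : 1 - lam = Real.exp (-L) := by
    rw [Real.exp_neg, hexpL]; field_simp
  set A : ℝ := rG * τ - (γTG / μT) * rT * τ with hA
  have hν : ν₁ = Real.exp (A - L) := by
    rw [hν₁, h1lam, ← Real.exp_add]; ring_nf
  have hRtA : Rt = A / L := by
    rw [hRt, hR₀, hR₀₁, hA]
    field_simp
  have hiff1 : ν₁ < 1 ↔ Rt < 1 := by
    rw [hν, hRtA, Real.exp_lt_one_iff, div_lt_one hL]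
    constructor <;> intro h <;> linarith
  have hiff2 : 1 < ν₁ ↔ 1 < Rt := by
    rw [hν, hRtA, Real.one_lt_exp_iff, one_lt_div hL] <;>
      constructor <;> intro h <;> linarith
  refine ⟨hiff1, hiff2, ?_, fun _ h => hiff1.mpr h, fun _ h => hiff2.mpr h⟩
  intro hR1
  apply hiff1.mpr
  rw [hRtA]
  rw [hR₀₁, div_mul_div_comm, div_le_one (by positivity)] at hR1
  have hApos : A ≤ 0 := by
    rw [hA]
    have : rG * τ ≤ γTG / μT * rT * τ := by
      rw [div_mul_eq_mul_div, div_mul_eq_mul_div, le_div_iff₀ hμT]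
      nlinarith
    linarith
  calc A / L ≤ 0 := div_nonpos_of_nonpos_of_nonneg hApos hL.le
    _ < 1 := one_pos
end

section
/- Let r > 0, μ > 0, Y = r/μ, τ > 0 and a ∈ (0,1) with (1−a)·e^{r·τ} > 1, and set T* = Y·((1−a)·e^{r·τ} − 1)/(e^{r·τ} − 1). Then: (i) ∫₀^τ T*·e^{r·u}/(1 + (T*/Y)·(e^{r·u} − 1)) du = (1/μ)·( ln(1−a) + r·τ ); and (ii) the Floquet multiplier λ₂* := (1−a)·exp( r·τ − 2μ·∫₀^τ T*·e^{r·u}/(1 + (T*/Y)(e^{r·u} − 1)) du ) equals exp( −r·τ + ln(1/(1−a)) ), so that λ₂* < 1 if and only if r·τ > ln(1/(1−a)). -/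
/-!
Between two fires the tree biomass follows the logistic law, whose solution
`T₀ e^{rt} / (1 + (T₀/Y)(e^{rt} - 1))` has the explicit primitive
`(Y/r) log (1 + (T₀/Y)(e^{rt} - 1))`. At the periodic post-pulse value `T*` the ratio `T*/Y`
lies in `[0, 1]`, so the logarithm is defined throughout, and over one period its argument
becomes `(1 - a) e^{rτ}`; the integral is therefore `(log (1 - a) + rτ)/μ`. Substituting it
into the multiplier collapses the exponent to `-rτ - log (1 - a)`.
-/

open Real Set

noncomputable def logisticSolution (r Y T₀ t : ℝ) : ℝ :=
  T₀ * exp (r * t) / (1 + T₀ / Y * (exp (r * t) - 1))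

/-- `1 + c (e^x - 1) = (1 - c) · 1 + c · e^x` is a convex combination of positive numbers. -/
lemma one_add_mul_exp_sub_one_pos {c : ℝ} (hc₀ : 0 ≤ c) (hc₁ : c ≤ 1) (x : ℝ) :
    0 < 1 + c * (exp x - 1) := by
  nlinarith [exp_pos x, min_le_left 1 (exp x), min_le_right 1 (exp x),
    lt_min one_pos (exp_pos x)]

section Logistic

variable {r Y T₀ : ℝ}

lemma hasDerivAt_log_logistic (hr : r ≠ 0) (hY : Y ≠ 0) {t : ℝ}
    (ht : 1 + T₀ / Y * (exp (r * t) - 1) ≠ 0) :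
    HasDerivAt (fun s => Y / r * log (1 + T₀ / Y * (exp (r * s) - 1)))
      (logisticSolution r Y T₀ t) t := by
  have hinner : HasDerivAt (fun s => 1 + T₀ / Y * (exp (r * s) - 1))
      (T₀ / Y * (exp (r * t) * r)) t := by
    simpa using ((((hasDerivAt_id t).const_mul r).exp.sub_const 1).const_mul (T₀ / Y)).const_add 1
  refine ((hinner.log ht).const_mul (Y / r)).congr_deriv ?_
  unfold logisticSolution
  field_simp

lemma integral_logisticSolution (hr : r ≠ 0) (hY : Y ≠ 0) {τ : ℝ}
    (hD : ∀ t ∈ uIcc 0 τ, 1 + T₀ / Y * (exp (r * t) - 1) ≠ 0) :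
    ∫ t in (0:ℝ)..τ, logisticSolution r Y T₀ t =
      Y / r * log (1 + T₀ / Y * (exp (r * τ) - 1)) := by
  have hcont : ContinuousOn (logisticSolution r Y T₀) (uIcc 0 τ) :=
    ContinuousOn.div (by fun_prop) (by fun_prop) hD
  rw [intervalIntegral.integral_eq_sub_of_hasDerivAt
    (fun t ht => hasDerivAt_log_logistic hr hY (hD t ht)) (hcont.intervalIntegrable)]
  simp

end Logistic

lemma postPulse_ratio_mem_Icc {a E : ℝ} (ha : 0 ≤ a) (hE : 1 < E) (hcond : 1 ≤ (1 - a) * E) :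
    ((1 - a) * E - 1) / (E - 1) ∈ Icc 0 1 := by
  have hE₁ : 0 < E - 1 := sub_pos.2 hE
  refine ⟨div_nonneg (by linarith) hE₁.le, (div_le_one hE₁).2 ?_⟩
  nlinarith

theorem savanna_tree_floquet_multiplier_general
    (r μ Y τ a Ts lam₂ : ℝ) (hr : 0 < r) (hμ : 0 < μ) (hY : Y = r / μ)
    (ha : a ∈ Set.Ioo (0:ℝ) 1)
    (hcond : 1 < (1 - a) * Real.exp (r * τ))
    (hTs : Ts = Y * ((1 - a) * Real.exp (r * τ) - 1) / (Real.exp (r * τ) - 1))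
    (hlam₂ : lam₂ = (1 - a) * Real.exp (r * τ - 2 * μ * ∫ u in (0:ℝ)..τ,
      Ts * Real.exp (r * u) / (1 + (Ts / Y) * (Real.exp (r * u) - 1)))) :
    (∫ u in (0:ℝ)..τ, Ts * Real.exp (r * u) / (1 + (Ts / Y) * (Real.exp (r * u) - 1))) =
      (1 / μ) * (Real.log (1 - a) + r * τ) ∧
    lam₂ = Real.exp (-(r * τ) + Real.log (1 / (1 - a))) ∧
    (lam₂ < 1 ↔ Real.log (1 / (1 - a)) < r * τ) := by
  obtain ⟨ha₀, ha₁⟩ := ha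
  have h1a : 0 < 1 - a := sub_pos.2 ha₁
  have hY₀ : Y ≠ 0 := by rw [hY]; positivity
  have hE : 1 < exp (r * τ) := by nlinarith [exp_pos (r * τ)]
  have hratio : Ts / Y = ((1 - a) * exp (r * τ) - 1) / (exp (r * τ) - 1) := by
    rw [hTs]; field_simp
  obtain ⟨hc₀, hc₁⟩ := hratio ▸ postPulse_ratio_mem_Icc ha₀.le hE hcond.le
  have hintegral : (∫ u in (0:ℝ)..τ, Ts * exp (r * u) / (1 + (Ts / Y) * (exp (r * u) - 1))) =
      (1 / μ) * (log (1 - a) + r * τ) := by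
    refine (integral_logisticSolution hr.ne' hY₀
      fun t _ => (one_add_mul_exp_sub_one_pos hc₀ hc₁ _).ne').trans ?_
    rw [hratio, div_mul_cancel₀ _ (sub_pos.2 hE).ne', add_sub_cancel, log_mul h1a.ne' (exp_pos _).ne', log_exp, hY]
    field_simp
  have hmultiplier : lam₂ = exp (-(r * τ) + log (1 / (1 - a))) := by
    rw [hlam₂, hintegral, one_div (1 - a), log_inv,
      show -(r * τ) + -log (1 - a) = log (1 - a) + (r * τ - 2 * μ * (1 / μ * (log (1 - a) + r * τ)))
        by field_simp; ring,
      exp_add, exp_log h1a]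
  refine ⟨hintegral, hmultiplier, ?_⟩
  rw [hmultiplier, exp_lt_one_iff, neg_add_lt_iff_lt_add, add_zero]

/-- Closed form of the integral of the periodic tree biomass over one
fire period and the resulting tree-direction Floquet multiplier of the periodic
savanna equilibrium. -/
theorem savanna_tree_floquet_multiplier
    (r μ Y τ a Ts lam₂ : ℝ) (hr : 0 < r) (hμ : 0 < μ) (hY : Y = r / μ)
    (hτ : 0 < τ) (ha : a ∈ Set.Ioo (0:ℝ) 1)
    (hcond : 1 < (1 - a) * Real.exp (r * τ))
    (hTs : Ts = Y * ((1 - a) * Real.exp (r * τ) - 1) / (Real.exp (r * τ) - 1))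
    (hlam₂ : lam₂ = (1 - a) * Real.exp (r * τ - 2 * μ * ∫ u in (0:ℝ)..τ,
      Ts * Real.exp (r * u) / (1 + (Ts / Y) * (Real.exp (r * u) - 1)))) :
    (∫ u in (0:ℝ)..τ, Ts * Real.exp (r * u) / (1 + (Ts / Y) * (Real.exp (r * u) - 1))) =
      (1 / μ) * (Real.log (1 - a) + r * τ) ∧
    lam₂ = Real.exp (-(r * τ) + Real.log (1 / (1 - a))) ∧
    (lam₂ < 1 ↔ Real.log (1 / (1 - a)) < r * τ) :=
  savanna_tree_floquet_multiplier_general r μ Y τ a Ts lam₂ hr hμ hY ha hcond hTs hlam₂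
end

section
/- Let r > 0, μ > 0, Y = r/μ, Δt > 0, φ(Δt) = (e^{r·Δt} − 1)/r, and T⁰ > 0. Then the unique T¹ solving the nonstandard finite difference relation (T¹ − T⁰)/φ(Δt) = r·T⁰ − μ·T⁰·T¹ is T¹ = T⁰·e^{r·Δt} / (1 + (T⁰/Y)·(e^{r·Δt} − 1)); that is, T¹ equals the exact value at time Δt of the logistic solution with initial value T⁰, so the nonstandard scheme with time-step function φ is exact for the logistic equation. -/
/-- The nonstandard finite difference scheme with time-step function
`φ(Δt) = (e^{rΔt} − 1)/r` is exact for the logistic equation: its unique solution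
`T¹` equals the exact logistic value at time `Δt`. -/
theorem nsfd_scheme_exact_for_logistic
    (r μ Y Δt T₀ : ℝ) (hr : 0 < r) (hμ : 0 < μ) (hY : Y = r / μ)
    (hΔt : 0 < Δt) (hT₀ : 0 < T₀)
    (φ : ℝ) (hφ : φ = (Real.exp (r * Δt) - 1) / r) :
    ∀ T₁ : ℝ, ((T₁ - T₀) / φ = r * T₀ - μ * T₀ * T₁ ↔
      T₁ = T₀ * Real.exp (r * Δt) / (1 + (T₀ / Y) * (Real.exp (r * Δt) - 1))) := by
  intro T₁
  have hE : 1 < Real.exp (r * Δt) := by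
    rw [show (1:ℝ) = Real.exp 0 by simp]
    exact Real.exp_lt_exp.2 (by positivity)
  set E := Real.exp (r * Δt) with hEdef
  have hφpos : 0 < φ := by rw [hφ]; exact div_pos (by linarith) hr
  have hden : 0 < 1 + (T₀ / Y) * (E - 1) := by
    rw [hY]
    have : 0 < T₀ / (r / μ) := by positivity
    nlinarith
  rw [hY] at hden
  rw [div_eq_iff hφpos.ne', hφ, hY]
  rw [eq_div_iff hden.ne']
  constructor <;> intro h
  · field_simp at h ⊢
    nlinarith [h]
  · field_simp at h ⊢
    nlinarith [h]
end
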